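/- arXiv:1808.01375 — 2 statements merged into one kernel-verified Lean document; each statement's English description precedes it below -/
import Mathlib

section
/- For any right R-module N, the counit δ_N : qpN → N (given by δ_N(Σ n_i e_i) = Σ n_i) is a right G_R-approximation of N: every homomorphism f : M → N with M a gradable R-module factors through δ_N. -/
open DirectSum

/-- A `ℤ`-graded module over a `ℤ`-graded ring `R` with grading `𝒜`. -/
structure GradedMod (R : Type) [Ring R] (𝒜 : ℤ → AddSubgroup R) where
  carrier : Type
  [acg : AddCommGroup carrier]
  [mod : Module R carrier]
  grading : ℤ → AddSubgroup carrier
  decomp : DirectSum.Decomposition grading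
  smul_mem : ∀ {i j : ℤ} {r : R} {m : carrier},
    r ∈ 𝒜 i → m ∈ grading j → r • m ∈ grading (i + j)

attribute [instance] GradedMod.acg GradedMod.mod

/-- A degree-zero morphism of graded modules. -/
structure GradedHom (R : Type) [Ring R] {𝒜 : ℤ → AddSubgroup R}
    (M N : GradedMod R 𝒜) where
  toFun : M.carrier →ₗ[R] N.carrier
  map_mem : ∀ (n : ℤ) (x : M.carrier), x ∈ M.grading n → toFun x ∈ N.grading n

/-- `P` is (isomorphic in `Gr-R` to) the pull-up `pN` of the module `N`:
each homogeneous component of `P` is a copy of `N`, compatibly with the action of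
homogeneous elements of `R` (which shift degrees). -/
structure IsPullUp (R : Type) [Ring R] (𝒜 : ℤ → AddSubgroup R)
    (N : Type) [AddCommGroup N] [Module R N] (P : GradedMod R 𝒜) where
  equiv : ∀ n : ℤ, P.grading n ≃+ N
  compat : ∀ (j n : ℤ) (r : R) (m : P.carrier) (hr : r ∈ 𝒜 j) (hm : m ∈ P.grading n),
    equiv (j + n) ⟨r • m, P.smul_mem hr hm⟩ = r • (equiv n ⟨m, hm⟩)

/-- A module is gradable if it admits a compatible `ℤ`-grading. -/
def IsGradable (R : Type) [Ring R] (𝒜 : ℤ → AddSubgroup R)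
    (N : Type) [AddCommGroup N] [Module R N] : Prop :=
  ∃ ℳ : ℤ → AddSubgroup N, Nonempty (DirectSum.Decomposition ℳ) ∧
    ∀ ⦃i j : ℤ⦄ ⦃r : R⦄ ⦃m : N⦄, r ∈ 𝒜 i → m ∈ ℳ j → r • m ∈ ℳ (i + j)

/-- The ring of degree-zero endomorphisms of a graded module,
i.e. its endomorphism ring in `Gr-R`, as a subring of the full endomorphism ring. -/
def gradedEnd (R : Type) [Ring R] {𝒜 : ℤ → AddSubgroup R} (M : GradedMod R 𝒜) :
    Subring (Module.End R M.carrier) where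
  carrier := {f | ∀ (n : ℤ) (x : M.carrier), x ∈ M.grading n → f x ∈ M.grading n}
  mul_mem' := fun hf hg n x hx => hf n _ (hg n x hx)
  one_mem' := fun _ _ hx => hx
  add_mem' := fun hf hg n x hx => add_mem (hf n x hx) (hg n x hx)
  zero_mem' := fun n _ _ => zero_mem (M.grading n)
  neg_mem' := fun hf n x hx => neg_mem (hf n x hx)

/-- Indecomposability of a module, via idempotent endomorphisms. -/
def IsIndec (R : Type) [Ring R] (N : Type) [AddCommGroup N] [Module R N] : Prop :=
  Nontrivial N ∧ ∀ f : Module.End R N, f * f = f → f = 0 ∨ f = 1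

/-- Indecomposability of a graded module in `Gr-R`, via idempotent degree-zero
endomorphisms. -/
def GradedIndec (R : Type) [Ring R] {𝒜 : ℤ → AddSubgroup R} (M : GradedMod R 𝒜) : Prop :=
  Nontrivial M.carrier ∧
    ∀ f ∈ gradedEnd R M, f * f = f → f = 0 ∨ f = 1

/-- The initial subring `R₀ = 𝒜 0` of a graded ring. -/
def degZero (R : Type) [Ring R] (𝒜 : ℤ → AddSubgroup R) [GradedRing 𝒜] : Subring R where
  carrier := 𝒜 0
  one_mem' := SetLike.one_mem_graded 𝒜
  mul_mem' := fun {a b} ha hb => by simpa using SetLike.mul_mem_graded ha hb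
  add_mem' := fun ha hb => add_mem ha hb
  zero_mem' := zero_mem _
  neg_mem' := fun h => neg_mem h

instance gradingSMul (R : Type) [Ring R] (𝒜 : ℤ → AddSubgroup R) [GradedRing 𝒜]
    (M : GradedMod R 𝒜) (n : ℤ) : SMul (degZero R 𝒜) (M.grading n) :=
  ⟨fun r m => ⟨(r : R) • (m : M.carrier), by
    have hr : (r : R) ∈ 𝒜 0 := r.2
    simpa using M.smul_mem hr m.2⟩⟩

instance gradingMulAction (R : Type) [Ring R] (𝒜 : ℤ → AddSubgroup R) [GradedRing 𝒜]
    (M : GradedMod R 𝒜) (n : ℤ) : MulAction (degZero R 𝒜) (M.grading n) where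
  one_smul m := Subtype.ext
    (show ((1 : degZero R 𝒜) : R) • (m : M.carrier) = m by simp)
  mul_smul r s m := Subtype.ext
    (show ((r * s : degZero R 𝒜) : R) • (m : M.carrier)
        = (r : R) • ((s : R) • (m : M.carrier)) by simp [mul_smul])

instance gradingDistribMulAction (R : Type) [Ring R] (𝒜 : ℤ → AddSubgroup R) [GradedRing 𝒜]
    (M : GradedMod R 𝒜) (n : ℤ) : DistribMulAction (degZero R 𝒜) (M.grading n) where
  smul_zero r := Subtype.ext
    (show (r : R) • ((0 : M.grading n) : M.carrier) = ((0 : M.grading n) : M.carrier) by simp)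
  smul_add r x y := Subtype.ext
    (show (r : R) • ((x + y : M.grading n) : M.carrier)
        = (r : R) • (x : M.carrier) + (r : R) • (y : M.carrier) by
      simp [smul_add])

/-- Each homogeneous component of a graded module is a module over the initial
subring `R₀`. -/
instance gradingModule (R : Type) [Ring R] (𝒜 : ℤ → AddSubgroup R) [GradedRing 𝒜]
    (M : GradedMod R 𝒜) (n : ℤ) : Module (degZero R 𝒜) (M.grading n) where
  add_smul r s m := Subtype.ext
    (show ((r + s : degZero R 𝒜) : R) • (m : M.carrier)
        = (r : R) • (m : M.carrier) + (s : R) • (m : M.carrier) by simp [add_smul])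
  zero_smul m := Subtype.ext
    (show ((0 : degZero R 𝒜) : R) • (m : M.carrier) = ((0 : M.grading n) : M.carrier) by simp)

/-- A module is pure-projective if it is a direct summand of a direct sum of
finitely presented modules. -/
def IsPureProjective (S : Type) [Ring S] (P : Type) [AddCommGroup P] [Module S P] : Prop :=
  ∃ (ι : Type) (F : ι → ModuleCat.{0} S), (∀ i, Module.FinitePresentation S (F i)) ∧
    ∃ (s : P →ₗ[S] ⨁ i, (F i : Type)) (r : (⨁ i, (F i : Type)) →ₗ[S] P),
      r.comp s = LinearMap.id

/-- `R` has finite representation type: finitely many finitely generated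
indecomposable modules up to isomorphism. -/
def FinRepType (R : Type) [Ring R] : Prop :=
  ∃ (n : ℕ) (F : Fin n → ModuleCat.{0} R),
    ∀ (N : Type) [AddCommGroup N] [Module R N], Module.Finite R N → IsIndec R N →
      ∃ i, Nonempty (N ≃ₗ[R] (F i : Type))

/-- There are only finitely many finitely generated indecomposable gradable
modules up to isomorphism. -/
def FinManyGradable (R : Type) [Ring R] (𝒜 : ℤ → AddSubgroup R) : Prop :=
  ∃ (n : ℕ) (F : Fin n → ModuleCat.{0} R),
    ∀ (N : Type) [AddCommGroup N] [Module R N], Module.Finite R N → IsIndec R N →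
      IsGradable R 𝒜 N → ∃ i, Nonempty (N ≃ₗ[R] (F i : Type))

/-- `b` is a bound on the graded lengths of all finitely generated indecomposable
graded modules. -/
def BoundedGrLength (R : Type) [Ring R] (𝒜 : ℤ → AddSubgroup R) (b : ℕ) : Prop :=
  ∀ M : GradedMod R 𝒜, Module.Finite R M.carrier → GradedIndec R M →
    ∀ m n : ℤ, M.grading m ≠ ⊥ → M.grading n ≠ ⊥ → m - n + 1 ≤ (b : ℤ)

/-- A module `P` has finite type if it lies in `Add X` for some finite length module `X`. -/
def HasFiniteType (S : Type) [Ring S] (P : Type) [AddCommGroup P] [Module S P] : Prop :=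
  ∃ X : ModuleCat.{0} S, (IsNoetherian S X ∧ IsArtinian S X) ∧
    ∃ (ι : Type) (s : P →ₗ[S] ⨁ _i : ι, (X : Type)) (r : (⨁ _i : ι, (X : Type)) →ₗ[S] P),
      r.comp s = LinearMap.id

/-- A Prüfer module: a locally nilpotent surjective endomorphism with nonzero
kernel of finite length. -/
def IsPrufer (S : Type) [Ring S] (P : Type) [AddCommGroup P] [Module S P]
    (φ : Module.End S P) : Prop :=
  Function.Surjective φ ∧ (∀ x : P, ∃ n : ℕ, (φ ^ n) x = 0) ∧
    LinearMap.ker φ ≠ ⊥ ∧ IsNoetherian S (LinearMap.ker φ) ∧ IsArtinian S (LinearMap.ker φ)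

/-- The opposite grading on `Rᵐᵒᵖ`. -/
def opGrading (R : Type) [Ring R] (𝒜 : ℤ → AddSubgroup R) : ℤ → AddSubgroup Rᵐᵒᵖ :=
  fun n => (𝒜 n).map (MulOpposite.opAddEquiv : R ≃+ Rᵐᵒᵖ).toAddMonoidHom

/-- The dual of a linear map, as a map of right modules (`Rᵐᵒᵖ`-modules). -/
def dualHom (R : Type) [Ring R] {P Q : Type} [AddCommGroup P] [Module R P]
    [AddCommGroup Q] [Module R Q] (f : P →ₗ[R] Q) :
    (Q →ₗ[R] R) →ₗ[Rᵐᵒᵖ] (P →ₗ[R] R) where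
  toFun φ := φ.comp f
  map_add' φ ψ := LinearMap.ext fun _ => rfl
  map_smul' r φ := LinearMap.ext fun _ => rfl

/-- A pure submodule: every finite system of linear equations with constants in `A`
solvable in `P` is solvable in `A`. -/
def IsPureSubmodule (S : Type) [Ring S] {P : Type} [AddCommGroup P] [Module S P]
    (A : Submodule S P) : Prop :=
  ∀ (k l : ℕ) (c : Matrix (Fin k) (Fin l) S) (a : Fin k → P), (∀ i, a i ∈ A) →
    (∃ x : Fin l → P, ∀ i, ∑ j, c i j • x j = a i) →
    ∃ x : Fin l → P, (∀ j, x j ∈ A) ∧ ∀ i, ∑ j, c i j • x j = a i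

/-- The submodule of the pull-up `pN` generated by the components in negative degrees. -/
def negPart (R : Type) [Ring R] {𝒜 : ℤ → AddSubgroup R} (P : GradedMod R 𝒜) :
    Submodule R P.carrier :=
  Submodule.span R (⋃ i : ℤ, ⋃ _ : i < 0, (P.grading i : Set P.carrier))

/-- The additive subgroup `N·R_{≥k}` (for left modules, `R_{≥k}·N`). -/
def NRge (R : Type) [Ring R] (𝒜 : ℤ → AddSubgroup R)
    (N : Type) [AddCommGroup N] [Module R N] (k : ℕ) : AddSubgroup N :=
  AddSubgroup.closure {x | ∃ j : ℤ, (k : ℤ) ≤ j ∧ ∃ r ∈ 𝒜 j, ∃ m : N, x = r • m}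

/-- The subquotient `N·R_{≥ d+1} / N·R_{≥ d+2}`. -/
def NRgeSubQuot (R : Type) [Ring R] (𝒜 : ℤ → AddSubgroup R)
    (N : Type) [AddCommGroup N] [Module R N] (d : ℕ) : Type :=
  NRge R 𝒜 N (d + 1) ⧸ (NRge R 𝒜 N (d + 2)).addSubgroupOf (NRge R 𝒜 N (d + 1))

instance (R : Type) [Ring R] (𝒜 : ℤ → AddSubgroup R)
    (N : Type) [AddCommGroup N] [Module R N] (d : ℕ) :
    AddCommGroup (NRgeSubQuot R 𝒜 N d) :=
  inferInstanceAs (AddCommGroup (_ ⧸ _))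

/-- An irreducible map between modules. -/
def IsIrreducibleMap (Λ : Type) [Ring Λ] {U V : Type} [AddCommGroup U] [Module Λ U]
    [AddCommGroup V] [Module Λ V] (f : U →ₗ[Λ] V) : Prop :=
  (¬ ∃ g : V →ₗ[Λ] U, g.comp f = LinearMap.id) ∧
  (¬ ∃ g : V →ₗ[Λ] U, f.comp g = LinearMap.id) ∧
  ∀ (W : Type) [AddCommGroup W] [Module Λ W], Module.Finite Λ W →
    ∀ (h : U →ₗ[Λ] W) (g : W →ₗ[Λ] V), g.comp h = f →
      (∃ h' : W →ₗ[Λ] U, h'.comp h = LinearMap.id) ∨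
      (∃ g' : V →ₗ[Λ] W, g.comp g' = LinearMap.id)

/-! A grading `G = ⨁ₙ Gₙ` of the source lets `f` be lifted degreewise: `x ∈ Gₙ` goes to the copy
of `f x` in the `n`-th component `(pN)ₙ ≅ N`. This map is additive by construction, the
compatibility of the identifications `(pN)ₙ ≅ N` with homogeneous scalars makes it `R`-linear,
and the counit undoes it on each homogeneous piece. -/

namespace DirectSum.Decomposition

variable {ι G M σ : Type*} [DecidableEq ι] [AddCommMonoid G] [AddCommMonoid M] [SetLike σ G]
  [AddSubmonoidClass σ G] (ℳ : ι → σ) [Decomposition ℳ]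

def liftAddHom (g : ∀ i, ℳ i →+ M) : G →+ M :=
  (toAddMonoid g).comp (decomposeAddEquiv ℳ).toAddMonoidHom

theorem liftAddHom_apply_of_mem (g : ∀ i, ℳ i →+ M) {i : ι} {x : G} (hx : x ∈ ℳ i) :
    liftAddHom ℳ g x = g i ⟨x, hx⟩ := by
  simp [liftAddHom, decompose_of_mem ℳ hx]

theorem addMonoidHom_ext ⦃φ ψ : G →+ M⦄ (h : ∀ i, ∀ x ∈ ℳ i, φ x = ψ x) : φ = ψ :=
  AddMonoidHom.ext fun x => Decomposition.inductionOn ℳ (by simp) (fun m => h _ _ m.2)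
    (fun _ _ ha hb => by rw [map_add, map_add, ha, hb]) x

theorem map_smul_of_homogeneous {R ι' τ : Type*} [DecidableEq ι'] [Semiring R] [Module R G]
    [Module R M] [SetLike τ R] [AddSubmonoidClass τ R] (𝒜 : ι' → τ) [Decomposition 𝒜]
    (φ : G →+ M) (h : ∀ i j r x, r ∈ 𝒜 i → x ∈ ℳ j → φ (r • x) = r • φ x) (r : R) (x : G) :
    φ (r • x) = r • φ x := by
  induction r using Decomposition.inductionOn 𝒜 with
  | zero => simp
  | add r s hr hs => rw [add_smul, map_add, hr, hs, add_smul]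
  | homogeneous r =>
    induction x using Decomposition.inductionOn ℳ with
    | zero => simp
    | add x y hx hy => rw [smul_add, map_add, hx, hy, map_add, smul_add]
    | homogeneous x => exact h _ _ _ _ r.2 x.2

end DirectSum.Decomposition

namespace IsPullUp

open DirectSum.Decomposition

variable {R : Type} [Ring R] {𝒜 : ℤ → AddSubgroup R} {N : Type} [AddCommGroup N] [Module R N]
  {P : GradedMod R 𝒜} (pu : IsPullUp R 𝒜 N P)

theorem coe_symm_smul {i j : ℤ} {r : R} (hr : r ∈ 𝒜 i) (y : N) :
    ((pu.equiv (i + j)).symm (r • y) : P.carrier) = r • ((pu.equiv j).symm y : P.carrier) := by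
  set m := (pu.equiv j).symm y
  have hm : pu.equiv (i + j) ⟨r • (m : P.carrier), P.smul_mem hr m.2⟩ = r • y := by
    rw [pu.compat i j r m hr m.2, AddEquiv.apply_symm_apply]
  rw [← hm, AddEquiv.symm_apply_apply]

variable {G : Type} [AddCommGroup G] [Module R G] (ℳ : ℤ → AddSubgroup G) [Decomposition ℳ]
  (hℳ : ∀ ⦃i j : ℤ⦄ ⦃r : R⦄ ⦃m : G⦄, r ∈ 𝒜 i → m ∈ ℳ j → r • m ∈ ℳ (i + j))
  [Decomposition 𝒜]

def lift (f : G →ₗ[R] N) : G →ₗ[R] P.carrier where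
  toAddHom := liftAddHom ℳ (fun n => (P.grading n).subtype.comp
    ((pu.equiv n).symm.toAddMonoidHom.comp (f.toAddMonoidHom.comp (ℳ n).subtype)))
  map_smul' := map_smul_of_homogeneous ℳ 𝒜 _ fun i j r x hr hx => by
    simp only [liftAddHom_apply_of_mem ℳ _ (hℳ hr hx), liftAddHom_apply_of_mem ℳ _ hx]
    change ((pu.equiv (i + j)).symm (f (r • x)) : P.carrier) = r • ((pu.equiv j).symm (f x) : _)
    rw [f.map_smul]
    exact pu.coe_symm_smul hr (f x)

theorem lift_apply_of_mem (f : G →ₗ[R] N) {n : ℤ} {x : G} (hx : x ∈ ℳ n) :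
    pu.lift ℳ hℳ f x = ((pu.equiv n).symm (f x) : P.carrier) :=
  liftAddHom_apply_of_mem ℳ _ hx

theorem comp_lift {δ : P.carrier →ₗ[R] N}
    (hδ : ∀ (n : ℤ) (m : P.carrier) (hm : m ∈ P.grading n), δ m = pu.equiv n ⟨m, hm⟩)
    (f : G →ₗ[R] N) : δ.comp (pu.lift ℳ hℳ f) = f := by
  refine LinearMap.toAddMonoidHom_injective (addMonoidHom_ext ℳ fun n x hx => ?_)
  change δ (pu.lift ℳ hℳ f x) = f x
  rw [pu.lift_apply_of_mem ℳ hℳ f hx, hδ n _ ((pu.equiv n).symm (f x)).2, AddEquiv.apply_symm_apply]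

end IsPullUp

/-- the counit `δ_N : qpN → N` is a right approximation by gradable
modules. -/
theorem stmt_2 (R : Type) [Ring R] (𝒜 : ℤ → AddSubgroup R) [GradedRing 𝒜]
    (N : Type) [AddCommGroup N] [Module R N]
    (P : GradedMod R 𝒜) (pu : IsPullUp R 𝒜 N P)
    (δ : P.carrier →ₗ[R] N)
    (hδ : ∀ (n : ℤ) (m : P.carrier) (hm : m ∈ P.grading n), δ m = pu.equiv n ⟨m, hm⟩)
    (G : Type) [AddCommGroup G] [Module R G] (hG : IsGradable R 𝒜 G)
    (f : G →ₗ[R] N) :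
    ∃ h : G →ₗ[R] P.carrier, δ.comp h = f := by
  obtain ⟨ℳ, ⟨_⟩, hℳ⟩ := hG
  exact ⟨pu.lift ℳ hℳ f, pu.comp_lift ℳ hℳ hδ f⟩
end

section
/- If M and M' are strongly indecomposable graded right R-modules (graded modules whose endomorphism rings in Gr-R are local), then qM ≅ qM' as R-modules if and only if M' ≅ M[i] in Gr-R for some i ∈ ℤ. -/
open DirectSum

/-!
Decompose an `R`-linear isomorphism `f : M → M'` with inverse `g` into its homogeneous
components `f_d : M → M'[d]`, `g_{-d} : M' → M[-d]`. On a nonzero homogeneous `x` of degree `n`,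
the degree-zero endomorphisms `g_{-d} f_d` of `M` add up (over the finitely many relevant `d`)
to the identity, so `x ≠ 0` prevents `1 - ∑ g_{-d} f_d` from being a unit. As the graded
endomorphism ring of `M` is local, some `g_{-d} f_d` is a unit, i.e. `f_d` is a split
monomorphism in `Gr-R`: `l f_d = 1` for some `l : M' → M[-d]`. Then `1 - f_d l` kills the image
of `f_d ≠ 0`, so it is not a unit, and locality of the graded endomorphism ring of `M'` makes
`f_d l` a unit; hence `f_d` is an isomorphism `M ≅ M'[d]`.
-/

attribute [instance] GradedMod.decomp

namespace GradedMod

variable {R : Type} [Ring R] {𝒜 : ℤ → AddSubgroup R}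

noncomputable def proj (M : GradedMod R 𝒜) (n : ℤ) : M.carrier →+ M.carrier :=
  AddMonoidHom.mk' (fun x => (decompose M.grading x n : M.carrier))
    (fun x y => by simp [decompose_add])

section Proj

variable (M : GradedMod R 𝒜)

lemma proj_mem (x : M.carrier) (n : ℤ) : M.proj n x ∈ M.grading n :=
  (decompose M.grading x n).2

variable {M}

lemma proj_of_mem_same {x : M.carrier} {n : ℤ} (hx : x ∈ M.grading n) : M.proj n x = x :=
  decompose_of_mem_same _ hx

lemma proj_of_mem_ne {x : M.carrier} {m n : ℤ} (hx : x ∈ M.grading m) (h : m ≠ n) :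
    M.proj n x = 0 :=
  decompose_of_mem_ne _ hx h

open Classical in
lemma sum_proj (x : M.carrier) :
    ∑ n ∈ (decompose M.grading x).support, M.proj n x = x :=
  sum_support_decompose M.grading x

lemma proj_smul {r : R} {j : ℤ} (hr : r ∈ 𝒜 j) (x : M.carrier) (n : ℤ) :
    M.proj (j + n) (r • x) = r • M.proj n x := by
  induction x using Decomposition.inductionOn M.grading with
  | zero => simp
  | @homogeneous i m =>
    obtain rfl | hin := eq_or_ne i n
    · rw [proj_of_mem_same (M.smul_mem hr m.2), proj_of_mem_same m.2]
    · rw [proj_of_mem_ne (M.smul_mem hr m.2) (by omega), proj_of_mem_ne m.2 hin, smul_zero]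
  | add x y hx hy => rw [smul_add, map_add, hx, hy, map_add, smul_add]

lemma exists_ne_zero_mem_grading [Nontrivial M.carrier] :
    ∃ (n : ℤ) (x : M.carrier), x ∈ M.grading n ∧ x ≠ 0 := by
  obtain ⟨x, hx⟩ := exists_ne (0 : M.carrier)
  by_contra! h
  exact hx <| (sum_proj x).symm.trans <| Finset.sum_eq_zero fun n _ => h n _ (proj_mem M x n)

end Proj

lemma nontrivial_of_isLocalRing_gradedEnd (M : GradedMod R 𝒜) [IsLocalRing (gradedEnd R M)] :
    Nontrivial M.carrier := by
  obtain ⟨a, b, hab⟩ := exists_pair_ne (gradedEnd R M)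
  obtain ⟨x, hx⟩ : ∃ x, (a : Module.End R M.carrier) x ≠ (b : Module.End R M.carrier) x := by
    by_contra! h
    exact hab (Subtype.ext (LinearMap.ext h))
  exact nontrivial_of_ne _ _ hx

variable {M M' : GradedMod R 𝒜}

def IsHomogeneousOfDegree (f : M.carrier →ₗ[R] M'.carrier) (d : ℤ) : Prop :=
  ∀ ⦃n : ℤ⦄ ⦃x : M.carrier⦄, x ∈ M.grading n → f x ∈ M'.grading (n + d)

lemma IsHomogeneousOfDegree.comp {M'' : GradedMod R 𝒜} {f : M.carrier →ₗ[R] M'.carrier}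
    {g : M'.carrier →ₗ[R] M''.carrier} {d e : ℤ} (hf : IsHomogeneousOfDegree f d)
    (hg : IsHomogeneousOfDegree g e) : IsHomogeneousOfDegree (g ∘ₗ f) (d + e) :=
  fun n _ hx => by rw [LinearMap.comp_apply, ← add_assoc]; exact hg (hf hx)

lemma mem_gradedEnd_iff {f : Module.End R M.carrier} :
    f ∈ gradedEnd R M ↔ IsHomogeneousOfDegree f 0 := by
  simp only [IsHomogeneousOfDegree, add_zero]
  exact ⟨fun h n x => h n x, fun h n x => @h n x⟩

theorem bijective_of_leftInverse [IsLocalRing (gradedEnd R M')] [Nontrivial M.carrier]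
    {a : M.carrier →ₗ[R] M'.carrier} {l : M'.carrier →ₗ[R] M.carrier} {d : ℤ}
    (ha : IsHomogeneousOfDegree a d) (hl : IsHomogeneousOfDegree l (-d)) (hla : l ∘ₗ a = .id) :
    Function.Bijective a := by
  let p : gradedEnd R M' := ⟨a ∘ₗ l, mem_gradedEnd_iff.2 <| by simpa using hl.comp ha⟩
  refine ⟨Function.LeftInverse.injective (g := l) (LinearMap.congr_fun hla), ?_⟩
  rcases IsLocalRing.isUnit_or_isUnit_of_add_one (add_sub_cancel p 1) with hp | hp
  · exact .of_comp ((Module.End.isUnit_iff _).1 (hp.map (gradedEnd R M').subtype)).2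
  · -- `p ∘ a = a ∘ (l ∘ a) = a`
    have hpa : ((1 - p : gradedEnd R M') : Module.End R M'.carrier) ∘ₗ a = 0 := by
      ext x
      simp [p, ← LinearMap.comp_apply l a, hla]
    obtain ⟨u, hu⟩ := hp.map (gradedEnd R M').subtype
    have ha0 : a = 0 :=
      calc a = (↑u⁻¹ * ↑u : Module.End R M'.carrier) ∘ₗ a := by rw [u.inv_mul]; rfl
        _ = ↑u⁻¹ ∘ₗ ((1 - p : gradedEnd R M') : Module.End R M'.carrier) ∘ₗ a := by rw [hu]; rfl
        _ = 0 := by rw [hpa, LinearMap.comp_zero]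
    obtain ⟨x, hx⟩ := exists_ne (0 : M.carrier)
    exact absurd (by simpa [ha0] using (LinearMap.congr_fun hla x).symm) hx

section DegComp

variable (f : M.carrier →ₗ[R] M'.carrier) (d : ℤ)

/-- The homogeneous component of degree `d` of `f`: on `M_n` it is `f` followed by the projection
onto `M'_{n+d}`. -/
noncomputable def degCompAddHom : M.carrier →+ M'.carrier :=
  (toAddMonoid fun n => (M'.proj (n + d)).comp (f.toAddMonoidHom.comp (M.grading n).subtype)).comp
    (decomposeAddEquiv M.grading).toAddMonoidHom

variable {f d}

lemma degCompAddHom_apply {x : M.carrier} {n m : ℤ} (hx : x ∈ M.grading n) (h : n + d = m) :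
    degCompAddHom f d x = M'.proj m (f x) := by
  subst h
  simp [degCompAddHom, decomposeAddEquiv_apply, decompose_of_mem _ hx]

variable [Decomposition 𝒜]

lemma degCompAddHom_smul (r : R) (x : M.carrier) :
    degCompAddHom f d (r • x) = r • degCompAddHom f d x := by
  induction x using Decomposition.inductionOn M.grading with
  | zero => simp
  | @homogeneous i m =>
    induction r using Decomposition.inductionOn 𝒜 with
    | zero => simp
    | @homogeneous j s =>
      rw [degCompAddHom_apply (M.smul_mem s.2 m.2) (add_assoc j i d), map_smul,
        proj_smul s.2, degCompAddHom_apply m.2 rfl]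
    | add r₁ r₂ h₁ h₂ => rw [add_smul, map_add, h₁, h₂, add_smul]
  | add x y hx hy => rw [smul_add, map_add, map_add, hx, hy, smul_add]

variable (f d)

noncomputable def degComp : M.carrier →ₗ[R] M'.carrier where
  toFun := degCompAddHom f d
  map_add' := map_add _
  map_smul' := degCompAddHom_smul

lemma isHomogeneousOfDegree_degComp : IsHomogeneousOfDegree (degComp f d) d :=
  fun n _ hx => by
    rw [degComp, LinearMap.coe_mk, AddHom.coe_mk, degCompAddHom_apply hx rfl]
    exact proj_mem _ _ _

variable {f d}

lemma degComp_apply {x : M.carrier} {n m : ℤ} (hx : x ∈ M.grading n) (h : n + d = m) :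
    degComp f d x = M'.proj m (f x) :=
  degCompAddHom_apply hx h

open Classical in
lemma sum_degComp_comp_degComp_apply (g : M'.carrier →ₗ[R] M.carrier) {x : M.carrier} {n : ℤ}
    (hx : x ∈ M.grading n) :
    ∑ m ∈ (decompose M'.grading (f x)).support,
        degComp g (-(m - n)) (degComp f (m - n) x) = M.proj n (g (f x)) := by
  calc ∑ m ∈ (decompose M'.grading (f x)).support,
          degComp g (-(m - n)) (degComp f (m - n) x)
      _ = ∑ m ∈ (decompose M'.grading (f x)).support, M.proj n (g (M'.proj m (f x))) := by
        refine Finset.sum_congr rfl fun m _ => ?_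
        rw [degComp_apply (m := m) hx (by omega), degComp_apply (m := n) (proj_mem _ _ _) (by omega)]
      _ = M.proj n (g (f x)) := by rw [← map_sum, ← map_sum, sum_proj]

end DegComp

variable [Decomposition 𝒜]

open Classical in
theorem exists_degComp_leftInverse [IsLocalRing (gradedEnd R M)]
    (f : M.carrier →ₗ[R] M'.carrier) (g : M'.carrier →ₗ[R] M.carrier) (hgf : g ∘ₗ f = .id) :
    ∃ (d : ℤ) (l : M'.carrier →ₗ[R] M.carrier),
      IsHomogeneousOfDegree l (-d) ∧ l ∘ₗ degComp f d = .id := by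
  have := nontrivial_of_isLocalRing_gradedEnd M
  obtain ⟨n, x, hx, hx0⟩ := exists_ne_zero_mem_grading (M := M)
  let H : ℤ → gradedEnd R M := fun m =>
    ⟨degComp g (-(m - n)) ∘ₗ degComp f (m - n), mem_gradedEnd_iff.2 <| add_neg_cancel (m - n) ▸
      (isHomogeneousOfDegree_degComp f _).comp (isHomogeneousOfDegree_degComp g _)⟩
  set s := (decompose M'.grading (f x)).support
  have hsum : (gradedEnd R M).subtype (∑ m ∈ s, H m) x = x := by
    simp only [map_sum, LinearMap.sum_apply, Subring.subtype_apply, H, LinearMap.comp_apply]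
    rw [sum_degComp_comp_degComp_apply g hx, ← LinearMap.comp_apply g f, hgf, LinearMap.id_apply,
      proj_of_mem_same hx]
  rcases IsLocalRing.isUnit_or_isUnit_of_add_one (add_sub_cancel (∑ m ∈ s, H m) 1)
    with hunit | hunit
  · obtain ⟨m, -, hm⟩ := IsLocalRing.exists_of_isUnit_sum hunit
    set k : gradedEnd R M := ↑hm.unit⁻¹
    refine ⟨m - n, (k : Module.End R M.carrier) ∘ₗ degComp g (-(m - n)), ?_, ?_⟩
    · simpa using (isHomogeneousOfDegree_degComp g _).comp (mem_gradedEnd_iff.1 k.2)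
    · have hk : k * H m = 1 := by rw [← hm.unit_spec]; exact hm.unit.inv_mul
      exact congrArg Subtype.val hk
  · refine absurd ?_ hx0
    refine ((Module.End.isUnit_iff _).1 (hunit.map (gradedEnd R M).subtype)).1 ?_
    rw [map_sub, map_one, LinearMap.sub_apply, hsum, Module.End.one_apply, sub_self, map_zero]

end GradedMod

/-- for strongly indecomposable graded modules `M, M'`,
`qM ≅ qM'` iff `M' ≅ M[i]` in `Gr-R` for some `i`. -/
theorem stmt_5 (R : Type) [Ring R] (𝒜 : ℤ → AddSubgroup R) [GradedRing 𝒜]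
    (M M' : GradedMod R 𝒜)
    (hM : IsLocalRing (gradedEnd R M)) (hM' : IsLocalRing (gradedEnd R M')) :
    Nonempty (M.carrier ≃ₗ[R] M'.carrier) ↔
      ∃ (i : ℤ) (e : M.carrier ≃ₗ[R] M'.carrier),
        ∀ (n : ℤ) (x : M.carrier), x ∈ M.grading n → e x ∈ M'.grading (n - i) := by
  refine ⟨fun ⟨e⟩ => ?_, fun ⟨_, e, _⟩ => ⟨e⟩⟩
  have := GradedMod.nontrivial_of_isLocalRing_gradedEnd M
  obtain ⟨d, l, hl, hla⟩ := GradedMod.exists_degComp_leftInverse (e : M.carrier →ₗ[R] M'.carrier)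
    e.symm (LinearMap.ext e.symm_apply_apply)
  have hd := GradedMod.isHomogeneousOfDegree_degComp (e : M.carrier →ₗ[R] M'.carrier) d
  refine ⟨-d, .ofBijective _ (GradedMod.bijective_of_leftInverse hd hl hla), fun n x hx => ?_⟩
  simpa using hd hx
end
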